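/- Let T ∈ B(X) be supercyclic and let {T_n} be a sequence in κ(T) with sup_n ‖T_n‖ < ∞ which is (n₀,0)-regular for some nonnegative integer n₀. Suppose μ ∈ ℂ with |μ| = 1 is an eigenvalue of the adjoint T*. Then the following are equivalent: (a) there exists y ∈ X not in the closure of the range of (T − μI) such that (T_n y) converges in norm to a nonzero limit; (b) X_0 ≠ X and X_c = X; (c) 1 is an eigenvalue of T and 1 is an eigenvalue of T*. -/

import Mathlib

/-!
Let `x₀` have dense scaled orbit `{c • Tᵏ x₀}`. Approximating vectors by `c • Tᵏ x₀`, the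
regularity `T Tₙ ≈ T_{n+n₀}` and the commutation `T Tₙ = Tₙ T` turn `Tₙ (c • Tᵏ x₀)` into
`c • T_{n+kn₀} x₀`, so everything reduces to the bounded sequence `Tₙ x₀`.

(a) ⇒ (b): if `Tₙ y → z ≠ 0`, then `c • T_{n+kn₀} x₀ ≈ z` with `c` bounded away from `0`, so `Tₙ x₀`
is Cauchy; uniform boundedness spreads this to the closure of the scaled orbit, which is `X`.

(b) ⇒ (c): the pointwise limit `P` of `Tₙ` is bounded (Banach–Steinhaus) with `TP = P = PT`; a
nonzero `P x` is a fixed vector and `h ∘ P` is a fixed functional for a suitable `h`.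

(c) ⇒ (a): let `Tu = u ≠ 0` and `g ∘ T = g ≠ 0`. Then `g u ≠ 0`, for otherwise `c • Tᵏ x₀ ≈ x₀ + u`
gives `c ≈ 1` and `c • T_{m+kn₀} x₀ ≈ Tₘ x₀ + u`, and telescoping `J` times contradicts boundedness.
On the scaled orbit `|f|` and `|g|` scale by the same factor `|c|`, as `|μ| = 1`, so they are
proportional; hence `f u ≠ 0` and `u` lies outside `ker f ⊇ closure (range (T - μ))`, while
`Tₙ u = u` because `Tₙ ∈ κ(T)`.
-/

open Filter Topology

/-- Membership in κ(T): operators of the form Σ_{j≥0} t_j T^j with t_j ≥ 0,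
Σ t_j = 1, and the series converging in operator norm. -/
def InKappa {X : Type*} [NormedAddCommGroup X] [NormedSpace ℂ X]
    (T S : X →L[ℂ] X) : Prop :=
  ∃ t : ℕ → ℝ, (∀ j, 0 ≤ t j) ∧ HasSum t 1 ∧ HasSum (fun j => t j • T ^ j) S

/-- (n₀,m)-regularity: ‖(T T_n − T_{n+n₀})x‖ → 0 for every x ∈ range((T−I)^m). -/
def RegularSeq {X : Type*} [NormedAddCommGroup X] [NormedSpace ℂ X]
    (T : X →L[ℂ] X) (Tn : ℕ → X →L[ℂ] X) (n₀ m : ℕ) : Prop :=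
  ∀ x ∈ Set.range ⇑((T - 1) ^ m),
    Tendsto (fun n => ‖T (Tn n x) - Tn (n + n₀) x‖) atTop (𝓝 0)

/-- T is supercyclic: the scaled orbit of some vector is dense. -/
def Supercyclic {X : Type*} [NormedAddCommGroup X] [NormedSpace ℂ X]
    (T : X →L[ℂ] X) : Prop :=
  ∃ x : X, Dense {y : X | ∃ (c : ℂ) (n : ℕ), y = c • (T ^ n) x}

section Sequences

open Finset

variable {𝕜 E : Type*} [NormedAddCommGroup E]

lemma norm_sub_inv_smul_le [NormedField 𝕜] [NormedSpace 𝕜 E] {a z : E} {c : 𝕜} {B δ : ℝ}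
    (ha : ‖a‖ ≤ B) (hz : z ≠ 0) (hδz : 2 * δ ≤ ‖z‖) (h : ‖c • a - z‖ ≤ δ) :
    ‖a - c⁻¹ • z‖ ≤ 2 * B * δ / ‖z‖ := by
  have hz' : 0 < ‖z‖ := norm_pos_iff.2 hz
  have hδ : 0 ≤ δ := (norm_nonneg _).trans h
  have hzc : ‖z‖ ≤ 2 * (‖c‖ * B) := by
    have := norm_le_norm_add_norm_sub' z (c • a)
    rw [norm_sub_rev, norm_smul] at this
    nlinarith [mul_le_mul_of_nonneg_left ha (norm_nonneg c)]
  have hc : c ≠ 0 := by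
    rintro rfl
    have : ‖z‖ ≤ 0 := by simpa using hzc
    linarith
  calc ‖a - c⁻¹ • z‖ = ‖c‖⁻¹ * ‖c • a - z‖ := by
        rw [← norm_inv, ← norm_smul, smul_sub, inv_smul_smul₀ hc]
    _ ≤ ‖c‖⁻¹ * δ := by gcongr
    _ ≤ 2 * B * δ / ‖z‖ := by
        rw [inv_mul_eq_div, div_le_div_iff₀ (norm_pos_iff.2 hc) hz']
        nlinarith

lemma cauchySeq_of_forall_eventually_norm_sub_le {u : ℕ → E}
    (h : ∀ ε > 0, ∃ ζ : E, ∀ᶠ m in atTop, ‖u m - ζ‖ ≤ ε) : CauchySeq u := by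
  refine Metric.cauchySeq_iff'.2 fun ε hε => ?_
  obtain ⟨ζ, hζ⟩ := h (ε / 3) (by positivity)
  obtain ⟨N, hN⟩ := eventually_atTop.1 hζ
  refine ⟨N, fun m hm => ?_⟩
  calc dist (u m) (u N) ≤ ‖u m - ζ‖ + ‖u N - ζ‖ := by
        rw [dist_eq_norm, norm_sub_rev (u N)]
        exact norm_sub_le_norm_sub_add_norm_sub _ _ _
    _ ≤ ε / 3 + ε / 3 := add_le_add (hN m hm) (hN N le_rfl)
    _ < ε := by linarith

-- The scalars stay away from zero, so `u` eventually stays near `c⁻¹ • z`.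
lemma cauchySeq_of_forall_eventually_norm_smul_sub_le [NormedField 𝕜] [NormedSpace 𝕜 E]
    {u : ℕ → E} {B : ℝ} (hu : ∀ m, ‖u m‖ ≤ B) {z : E} (hz : z ≠ 0)
    (h : ∀ ε > 0, ∃ c : 𝕜, ∀ᶠ m in atTop, ‖c • u m - z‖ ≤ ε) : CauchySeq u := by
  have hB : 0 ≤ B := (norm_nonneg _).trans (hu 0)
  have hz' : 0 < ‖z‖ := norm_pos_iff.2 hz
  refine cauchySeq_of_forall_eventually_norm_sub_le fun ε hε => ?_
  set δ := ε * ‖z‖ / (4 * B + 2 * ε)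
  have hδ : 0 < δ := by positivity
  have hδz : 2 * δ ≤ ‖z‖ := by
    simp only [δ]
    rw [mul_div_assoc', div_le_iff₀ (by positivity)]
    nlinarith
  have hBδ : 2 * B * δ / ‖z‖ ≤ ε := by
    simp only [δ]
    rw [div_le_iff₀ hz', mul_div_assoc', div_le_iff₀ (by positivity)]
    nlinarith [mul_pos hε hz']
  obtain ⟨c, hc⟩ := h δ hδ
  exact ⟨c⁻¹ • z, hc.mono fun m hm => (norm_sub_inv_smul_le (hu m) hz hδz hm).trans hBδ⟩

lemma norm_geom_sum_smul_le [NormedField 𝕜] [NormedSpace 𝕜 E] {v : ℕ → E} {B η : ℝ}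
    (hv : ∀ m, ‖v m‖ ≤ B) {u : E} {c : 𝕜} {k : ℕ}
    (h : ∀ᶠ m in atTop, ‖c • v (m + k) - v m - u‖ ≤ η) (J : ℕ) :
    ‖(∑ i ∈ range J, c ^ i) • u‖ ≤ ‖c‖ ^ J * B + B + (∑ i ∈ range J, ‖c‖ ^ i) * η := by
  obtain ⟨N, hN⟩ := eventually_atTop.1 h
  have telescope : ∀ j, ‖c ^ j • v (N + j * k) - v N - (∑ i ∈ range j, c ^ i) • u‖
      ≤ (∑ i ∈ range j, ‖c‖ ^ i) * η := by
    intro j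
    induction j with
    | zero => simp
    | succ j ih =>
      have e : c ^ (j + 1) • v (N + (j + 1) * k) - v N - (∑ i ∈ range (j + 1), c ^ i) • u
          = c ^ j • (c • v (N + j * k + k) - v (N + j * k) - u)
            + (c ^ j • v (N + j * k) - v N - (∑ i ∈ range j, c ^ i) • u) := by
        rw [sum_range_succ, add_smul, show N + (j + 1) * k = N + j * k + k by ring,
          pow_succ, mul_smul]
        simp only [smul_sub]
        abel
      rw [e, sum_range_succ, add_mul, add_comm _ (‖c‖ ^ j * η)]
      refine (norm_add_le _ _).trans (add_le_add ?_ ih)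
      rw [norm_smul, norm_pow]
      exact mul_le_mul_of_nonneg_left (hN _ (by omega)) (by positivity)
  have e : (∑ i ∈ range J, c ^ i) • u = c ^ J • v (N + J * k) - v N
      - (c ^ J • v (N + J * k) - v N - (∑ i ∈ range J, c ^ i) • u) := by abel
  rw [e]
  refine (norm_sub_le _ _).trans (add_le_add ((norm_sub_le _ _).trans (add_le_add ?_ (hv N)))
    (telescope J))
  rw [norm_smul, norm_pow]
  exact mul_le_mul_of_nonneg_left (hv _) (by positivity)

/-- If `c • v (m + k) ≈ v m + u` with `c ≈ 1`, telescoping gives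
`c ^ J • v (m + J * k) ≈ v m + J • u` for every `J`, impossible for a bounded `v` unless `u = 0`. -/
lemma eq_zero_of_eventually_norm_smul_shift_sub_le [RCLike 𝕜] [NormedSpace 𝕜 E] {v : ℕ → E}
    {B : ℝ} (hv : ∀ m, ‖v m‖ ≤ B) {u : E} {c : ℕ → 𝕜} {k : ℕ → ℕ} {ε : ℕ → ℝ}
    (hc : Tendsto c atTop (𝓝 1)) (hε : Tendsto ε atTop (𝓝 0))
    (h : ∀ n, ∀ᶠ m in atTop, ‖c n • v (m + k n) - v m - u‖ ≤ ε n) : u = 0 := by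
  have hJ : ∀ J : ℕ, J * ‖u‖ ≤ 2 * B := by
    intro J
    have lhs : Tendsto (fun n => ‖(∑ i ∈ range J, c n ^ i) • u‖) atTop (𝓝 (J * ‖u‖)) := by
      simpa [norm_smul] using
        ((tendsto_finsetSum (range J) fun i _ => hc.pow i).smul_const u).norm
    have rhs : Tendsto (fun n => ‖c n‖ ^ J * B + B + (∑ i ∈ range J, ‖c n‖ ^ i) * ε n)
        atTop (𝓝 (2 * B)) := by
      simpa [two_mul] using (((hc.norm.pow J).mul_const B).add_const B).add
        ((tendsto_finsetSum (range J) fun i _ => hc.norm.pow i).mul hε)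
    exact le_of_tendsto_of_tendsto' lhs rhs fun n => norm_geom_sum_smul_le hv (h n) J
  by_contra hu
  obtain ⟨J, hJB⟩ := exists_nat_gt (2 * B / ‖u‖)
  rw [div_lt_iff₀ (norm_pos_iff.2 hu)] at hJB
  linarith [hJ J]

end Sequences

lemma isClosed_setOf_cauchySeq_apply {𝕜 E F : Type*} [NontriviallyNormedField 𝕜]
    [NormedAddCommGroup E] [NormedSpace 𝕜 E] [NormedAddCommGroup F] [NormedSpace 𝕜 F]
    {A : ℕ → E →L[𝕜] F} {C : ℝ} (hA : ∀ n, ‖A n‖ ≤ C) :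
    IsClosed {x | CauchySeq fun n => A n x} := by
  have hequi : Equicontinuous fun p : ℕ × ℕ => ⇑(A p.1 - A p.2) := by
    have := (NormedSpace.equicontinuous_TFAE fun p : ℕ × ℕ => A p.1 - A p.2).out 5 1
    exact this.1 ⟨C + C, fun p => (norm_sub_le _ _).trans (add_le_add (hA _) (hA _))⟩
  convert hequi.isClosed_setOfPred_tendsto (l := atTop) (f := fun _ => 0) continuous_const
    using 2 with x
  simp [cauchySeq_iff_tendsto_dist_atTop_0, dist_eq_norm, ← tendsto_zero_iff_norm_tendsto_zero]

section Operators

variable {X : Type*} [NormedAddCommGroup X] [NormedSpace ℂ X] {T : X →L[ℂ] X}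

def scaledOrbit (T : X →L[ℂ] X) (x : X) : Set X := {y | ∃ (c : ℂ) (n : ℕ), y = c • (T ^ n) x}

lemma pow_apply_comm {S : X →L[ℂ] X} (h : Commute T S) (n : ℕ) (v : X) :
    (T ^ n) (S v) = S ((T ^ n) v) :=
  DFunLike.congr_fun (h.pow_left n).eq v

lemma InKappa.commute {S : X →L[ℂ] X} (h : InKappa T S) : Commute T S := by
  obtain ⟨t, -, -, hts⟩ := h
  have := hts.mul_right T
  simp_rw [smul_mul_assoc, ← (Commute.self_pow T _).eq, ← mul_smul_comm] at this
  exact (hts.mul_left T).unique this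

lemma InKappa.apply_eq_self {S : X →L[ℂ] X} (h : InKappa T S) {u : X} (hu : T u = u) :
    S u = u := by
  obtain ⟨t, -, ht1, hts⟩ := h
  have hpow : ∀ j, (T ^ j) u = u := fun j => by
    rw [FunLike.coe_pow_eq_iterate]
    exact Function.iterate_fixed hu j
  have := hts.mapL (ContinuousLinearMap.apply ℂ X u)
  simp only [ContinuousLinearMap.apply_apply, smul_apply, hpow] at this
  simpa using this.unique (ht1.smul_const u)

lemma apply_pow_eq {f : X →L[ℂ] ℂ} {μ : ℂ} (hf : ∀ x, f (T x) = μ * f x) (n : ℕ) (x : X) :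
    f ((T ^ n) x) = μ ^ n * f x := by
  induction n generalizing x with
  | zero => simp
  | succ n ih => rw [pow_succ, mul_apply_eq_comp, ih, hf, pow_succ, mul_assoc]

section Regular

variable {Tn : ℕ → X →L[ℂ] X} {n₀ : ℕ} {C : ℝ}

lemma RegularSeq.tendsto_apply_sub (h : RegularSeq T Tn n₀ 0) (x : X) :
    Tendsto (fun m => T (Tn m x) - Tn (m + n₀) x) atTop (𝓝 0) :=
  tendsto_zero_iff_norm_tendsto_zero.2 (h x ⟨x, by simp⟩)

lemma RegularSeq.tendsto_pow_apply_sub (h : RegularSeq T Tn n₀ 0) (k : ℕ) (x : X) :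
    Tendsto (fun m => (T ^ k) (Tn m x) - Tn (m + k * n₀) x) atTop (𝓝 0) := by
  induction k with
  | zero => simp
  | succ k ih =>
    have := ((T.continuous.tendsto 0).comp ih).add
      ((RegularSeq.tendsto_apply_sub h x).comp (tendsto_add_atTop_nat (k * n₀)))
    rw [map_zero, add_zero] at this
    refine this.congr fun m => ?_
    simp only [Function.comp_apply, map_sub, pow_succ', mul_apply_eq_comp,
      show m + (k + 1) * n₀ = m + k * n₀ + n₀ by ring]
    abel

lemma eventually_norm_smul_shift_sub_apply_lt (hcomm : ∀ n, Commute T (Tn n))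
    (hbdd : ∀ n, ‖Tn n‖ ≤ C) (hreg : RegularSeq T Tn n₀ 0) (x₀ y : X) (c : ℂ) (k : ℕ)
    {δ : ℝ} (hδ : 0 < δ) :
    ∀ᶠ m in atTop, ‖c • Tn (m + k * n₀) x₀ - Tn m y‖ < C * ‖c • (T ^ k) x₀ - y‖ + δ := by
  have hlim : Tendsto (fun m => c • Tn (m + k * n₀) x₀ - Tn m (c • (T ^ k) x₀)) atTop (𝓝 0) := by
    have := ((hreg.tendsto_pow_apply_sub k x₀).const_smul c).neg
    rw [smul_zero, neg_zero] at this
    refine this.congr fun m => ?_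
    rw [map_smul, ← pow_apply_comm (hcomm m), smul_sub, neg_sub]
  filter_upwards [(tendsto_zero_iff_norm_tendsto_zero.1 hlim).eventually (gt_mem_nhds hδ)]
    with m hm
  calc ‖c • Tn (m + k * n₀) x₀ - Tn m y‖
      ≤ ‖c • Tn (m + k * n₀) x₀ - Tn m (c • (T ^ k) x₀)‖ + ‖Tn m (c • (T ^ k) x₀ - y)‖ := by
        rw [map_sub]
        exact norm_sub_le_norm_sub_add_norm_sub _ _ _
    _ < δ + C * ‖c • (T ^ k) x₀ - y‖ :=
        add_lt_add_of_lt_of_le hm ((Tn m).le_of_opNorm_le (hbdd m) _)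
    _ = _ := add_comm _ _

end Regular

section Orbit

variable {x₀ : X}

lemma apply_ne_zero_of_dense (hd : Dense (scaledOrbit T x₀)) {f : X →L[ℂ] ℂ} (hf : f ≠ 0)
    {μ : ℂ} (hfT : ∀ x, f (T x) = μ * f x) : f x₀ ≠ 0 := by
  intro h0
  refine hf (DFunLike.coe_injective (Continuous.ext_on hd f.continuous
    (0 : X →L[ℂ] ℂ).continuous ?_))
  rintro _ ⟨c, n, rfl⟩
  rw [map_smul, apply_pow_eq hfT, h0]
  simp

lemma apply_ne_zero_of_apply_ne_zero (hd : Dense (scaledOrbit T x₀)) {f g : X →L[ℂ] ℂ}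
    {μ ν : ℂ} (hμν : ‖μ‖ = ‖ν‖) (hf : f ≠ 0) (hfT : ∀ x, f (T x) = μ * f x)
    (hgT : ∀ x, g (T x) = ν * g x) {u : X} (hgu : g u ≠ 0) : f u ≠ 0 := by
  have hprop : ∀ x, ‖f x‖ * ‖g x₀‖ = ‖g x‖ * ‖f x₀‖ := fun x => by
    refine congrFun (Continuous.ext_on hd (f.continuous.norm.mul continuous_const)
      (g.continuous.norm.mul continuous_const) ?_) x
    rintro _ ⟨c, n, rfl⟩
    simp only [Pi.mul_apply, map_smul, apply_pow_eq hfT, apply_pow_eq hgT, smul_eq_mul, norm_mul,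
      norm_pow, hμν]
    ring
  intro hfu
  have := hprop u
  rw [hfu, norm_zero, zero_mul, eq_comm, mul_eq_zero, norm_eq_zero, norm_eq_zero] at this
  exact this.elim hgu (apply_ne_zero_of_dense hd hf hfT)

lemma notMem_closure_range_sub_smul {f : X →L[ℂ] ℂ} {μ : ℂ} (hf : ∀ x, f (T x) = μ * f x)
    {u : X} (hu : f u ≠ 0) : u ∉ closure (Set.range ⇑(T - μ • 1)) := by
  have : closure (Set.range ⇑(T - μ • 1)) ⊆ {w | f w = 0} :=
    closure_minimal (by rintro _ ⟨x, rfl⟩; simp [hf]) (isClosed_eq f.continuous continuous_const)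
  exact fun h => hu (this h)

variable {Tn : ℕ → X →L[ℂ] X} {n₀ : ℕ} {C : ℝ}

/-- Approximating `y` by `c • (T ^ k) x₀`, regularity turns `Tn m y → z` into
`c • Tn (m + k * n₀) x₀ ≈ z`. -/
lemma cauchySeq_apply_of_tendsto (hd : Dense (scaledOrbit T x₀)) (hcomm : ∀ n, Commute T (Tn n))
    (hbdd : ∀ n, ‖Tn n‖ ≤ C) (hreg : RegularSeq T Tn n₀ 0) {y z : X} (hz : z ≠ 0)
    (hyz : Tendsto (fun n => Tn n y) atTop (𝓝 z)) : CauchySeq fun n => Tn n x₀ := by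
  have hC : 0 ≤ C := (norm_nonneg _).trans (hbdd 0)
  refine cauchySeq_of_forall_eventually_norm_smul_sub_le (𝕜 := ℂ)
    (fun m => (Tn m).le_of_opNorm_le (hbdd m) x₀) hz fun ε hε => ?_
  obtain ⟨_, ⟨c, k, rfl⟩, hyw⟩ :=
    hd.exists_dist_lt y (show 0 < ε / (3 * (C + 1)) by positivity)
  have hCw : C * ‖c • (T ^ k) x₀ - y‖ ≤ ε / 3 := by
    rw [← dist_eq_norm, dist_comm]
    calc C * dist y (c • (T ^ k) x₀) ≤ (C + 1) * (ε / (3 * (C + 1))) :=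
          mul_le_mul (by linarith) hyw.le dist_nonneg (by linarith)
      _ = ε / 3 := by field_simp
  refine ⟨c, ?_⟩
  rw [← map_add_atTop_eq_nat (k * n₀), eventually_map]
  filter_upwards [eventually_norm_smul_shift_sub_apply_lt hcomm hbdd hreg x₀ y c k
      (show 0 < ε / 3 by positivity),
    (tendsto_iff_norm_sub_tendsto_zero.1 hyz).eventually
      (gt_mem_nhds (show 0 < ε / 3 by positivity))]
    with m h1 h2
  calc ‖c • Tn (m + k * n₀) x₀ - z‖ ≤ ‖c • Tn (m + k * n₀) x₀ - Tn m y‖ + ‖Tn m y - z‖ :=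
        norm_sub_le_norm_sub_add_norm_sub _ _ _
    _ ≤ ε := by linarith

lemma cauchySeq_apply_of_cauchySeq_apply (hd : Dense (scaledOrbit T x₀))
    (hcomm : ∀ n, Commute T (Tn n)) (hbdd : ∀ n, ‖Tn n‖ ≤ C)
    (h₀ : CauchySeq fun n => Tn n x₀) (x : X) : CauchySeq fun n => Tn n x := by
  refine (isClosed_setOf_cauchySeq_apply hbdd).closure_subset_iff.2 ?_ (hd x)
  rintro _ ⟨c, k, rfl⟩
  show CauchySeq fun n => Tn n (c • (T ^ k) x₀)
  convert (c • T ^ k).uniformContinuous.comp_cauchySeq h₀ using 2 with n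
  rw [Function.comp_apply, smul_apply, map_smul, pow_apply_comm (hcomm n)]

lemma exists_tendsto_apply_of_tendsto_ne_zero [CompleteSpace X] (hd : Dense (scaledOrbit T x₀))
    (hcomm : ∀ n, Commute T (Tn n)) (hbdd : ∀ n, ‖Tn n‖ ≤ C) (hreg : RegularSeq T Tn n₀ 0)
    {y z : X} (hz : z ≠ 0) (hyz : Tendsto (fun n => Tn n y) atTop (𝓝 z)) (x : X) :
    ∃ w, Tendsto (fun n => Tn n x) atTop (𝓝 w) :=
  cauchySeq_tendsto_of_complete <| cauchySeq_apply_of_cauchySeq_apply hd hcomm hbdd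
    (cauchySeq_apply_of_tendsto hd hcomm hbdd hreg hz hyz) x

/-- If `g u = 0`, approximating `x₀ + u` by `c • (T ^ k) x₀` forces `c ≈ 1` and
`c • Tn (m + k * n₀) x₀ ≈ Tn m x₀ + u`, which bounded sequences only allow for `u = 0`. -/
lemma map_ne_zero_of_isFixedPt (hd : Dense (scaledOrbit T x₀)) (hκ : ∀ n, InKappa T (Tn n))
    (hbdd : ∀ n, ‖Tn n‖ ≤ C) (hreg : RegularSeq T Tn n₀ 0) {u : X} (hu : T u = u)
    (hu0 : u ≠ 0) {g : X →L[ℂ] ℂ} (hg : g ≠ 0) (hgT : ∀ x, g (T x) = g x) : g u ≠ 0 := by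
  intro hgu
  have hgT' : ∀ x, g (T x) = 1 * g x := by simpa using hgT
  have hgx₀ := apply_ne_zero_of_dense hd hg hgT'
  obtain ⟨w, hws, hw⟩ := mem_closure_iff_seq_limit.1 (hd (x₀ + u))
  choose c k hck using hws
  have hc : Tendsto c atTop (𝓝 1) := by
    have := ((g.continuous.tendsto _).comp hw).div_const (g x₀)
    rw [map_add, hgu, add_zero, div_self hgx₀] at this
    refine this.congr fun n => ?_
    rw [Function.comp_apply, hck, map_smul, apply_pow_eq hgT', one_pow, one_mul, smul_eq_mul,
      mul_div_cancel_right₀ _ hgx₀]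
  refine hu0 (eq_zero_of_eventually_norm_smul_shift_sub_le
    (fun m => (Tn m).le_of_opNorm_le (hbdd m) x₀) hc
    (ε := fun n => C * ‖w n - (x₀ + u)‖ + 1 / (n + 1)) ?_ (k := fun n => k n * n₀) fun n => ?_)
  · simpa using ((tendsto_iff_norm_sub_tendsto_zero.1 hw).const_mul C).add
      tendsto_one_div_add_atTop_nhds_zero_nat
  · filter_upwards [eventually_norm_smul_shift_sub_apply_lt (fun n => (hκ n).commute) hbdd hreg
      x₀ (x₀ + u) (c n) (k n) Nat.one_div_pos_of_nat] with m hm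
    rw [map_add, (hκ m).apply_eq_self hu, ← hck] at hm
    rw [sub_sub]
    exact hm.le

end Orbit

lemma exists_isFixedPt_and_invariant_dual [CompleteSpace X] {Tn : ℕ → X →L[ℂ] X} {n₀ : ℕ}
    (hcomm : ∀ n, Commute T (Tn n)) (hreg : RegularSeq T Tn n₀ 0)
    (hconv : ∀ x, ∃ z, Tendsto (fun n => Tn n x) atTop (𝓝 z))
    (hnz : ∃ x, ¬ Tendsto (fun n => ‖Tn n x‖) atTop (𝓝 0)) :
    (∃ x, x ≠ 0 ∧ T x = x) ∧ ∃ g : X →L[ℂ] ℂ, g ≠ 0 ∧ ∀ x, g (T x) = g x := by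
  choose φ hφ using hconv
  let P : X →L[ℂ] X := continuousLinearMapOfTendsto Tn (tendsto_pi_nhds.2 hφ)
  have hP : ∀ x, Tendsto (fun n => Tn n x) atTop (𝓝 (P x)) := hφ
  have hTP : ∀ x, T (P x) = P x := fun x => by
    refine tendsto_nhds_unique ((T.continuous.tendsto _).comp (hP x)) ?_
    simpa [Function.comp_def] using
      (hreg.tendsto_apply_sub x).add ((hP x).comp (tendsto_add_atTop_nat n₀))
  have hPT : ∀ x, P (T x) = P x := fun x => by
    refine (tendsto_nhds_unique (hP (T x)) ?_).trans (hTP x)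
    exact ((T.continuous.tendsto _).comp (hP x)).congr fun n =>
      DFunLike.congr_fun (hcomm n).eq x
  obtain ⟨x, hx⟩ := hnz
  have hPx : P x ≠ 0 := fun h => hx (by simpa [h] using (hP x).norm)
  obtain ⟨h, hh⟩ := SeparatingDual.exists_ne_zero (R := ℂ) hPx
  exact ⟨⟨P x, hPx, hTP x⟩, h.comp P, fun h0 => hh (by simpa using DFunLike.congr_fun h0 x),
    fun y => by simp [hPT]⟩

end Operators

/-- Let T be supercyclic, {T_n} ⊆ κ(T) bounded and (n₀,0)-regular, and let μ with
|μ| = 1 be an eigenvalue of T*. Then the following are equivalent: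
(a) T_n y converges to a nonzero limit for some y ∉ closure(range(T−μI));
(b) X₀ ≠ X and X_c = X;
(c) 1 is an eigenvalue of T and of T*. -/
theorem stmt9 {X : Type*} [NormedAddCommGroup X] [NormedSpace ℂ X] [CompleteSpace X]
    (T : X →L[ℂ] X) (hsc : Supercyclic T)
    (Tn : ℕ → X →L[ℂ] X) (hκ : ∀ n, InKappa T (Tn n))
    (C : ℝ) (hbdd : ∀ n, ‖Tn n‖ ≤ C)
    (n₀ : ℕ) (hreg : RegularSeq T Tn n₀ 0)
    (μ : ℂ) (hμ : ‖μ‖ = 1)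
    (f : X →L[ℂ] ℂ) (hf : f ≠ 0) (hfeig : ∀ x : X, f (T x) = μ * f x) :
    ((∃ y : X, y ∉ closure (Set.range ⇑(T - μ • 1)) ∧
        ∃ z : X, z ≠ 0 ∧ Tendsto (fun n => Tn n y) atTop (𝓝 z))
      ↔ ({x : X | Tendsto (fun n => ‖Tn n x‖) atTop (𝓝 0)} ≠ Set.univ ∧
          {x : X | ∃ z : X, Tendsto (fun n => Tn n x) atTop (𝓝 z)} = Set.univ)) ∧
    (({x : X | Tendsto (fun n => ‖Tn n x‖) atTop (𝓝 0)} ≠ Set.univ ∧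
        {x : X | ∃ z : X, Tendsto (fun n => Tn n x) atTop (𝓝 z)} = Set.univ)
      ↔ ((∃ x : X, x ≠ 0 ∧ T x = x) ∧
          ∃ g : X →L[ℂ] ℂ, g ≠ 0 ∧ ∀ x : X, g (T x) = g x)) := by
  obtain ⟨x₀, hd⟩ := hsc
  have hcomm : ∀ n, Commute T (Tn n) := fun n => (hκ n).commute
  simp only [Set.ne_univ_iff_exists_notMem, Set.eq_univ_iff_forall, Set.mem_ofPred_eq]
  have a_to_b : ∀ y z, z ≠ 0 → Tendsto (fun n => Tn n y) atTop (𝓝 z) →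
      (∃ x, ¬ Tendsto (fun n => ‖Tn n x‖) atTop (𝓝 0)) ∧
        ∀ x, ∃ w, Tendsto (fun n => Tn n x) atTop (𝓝 w) := fun y z hz hyz =>
    ⟨⟨y, fun h => hz (norm_eq_zero.1 (tendsto_nhds_unique hyz.norm h))⟩,
      exists_tendsto_apply_of_tendsto_ne_zero hd hcomm hbdd hreg hz hyz⟩
  have b_to_c := fun hb : _ ∧ _ => exists_isFixedPt_and_invariant_dual hcomm hreg hb.2 hb.1
  have c_to_a : ((∃ u, u ≠ 0 ∧ T u = u) ∧ ∃ g : X →L[ℂ] ℂ, g ≠ 0 ∧ ∀ x, g (T x) = g x) →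
      ∃ y, y ∉ closure (Set.range ⇑(T - μ • 1)) ∧
        ∃ z, z ≠ 0 ∧ Tendsto (fun n => Tn n y) atTop (𝓝 z) := by
    rintro ⟨⟨u, hu0, hu⟩, g, hg, hgT⟩
    have hgu : g u ≠ 0 := map_ne_zero_of_isFixedPt hd hκ hbdd hreg hu hu0 hg hgT
    have hfu : f u ≠ 0 := apply_ne_zero_of_apply_ne_zero hd (hμ.trans norm_one.symm) hf hfeig
      (fun x => (hgT x).trans (one_mul _).symm) hgu
    exact ⟨u, notMem_closure_range_sub_smul hfeig hfu, u, hu0,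
      tendsto_const_nhds.congr fun m => ((hκ m).apply_eq_self hu).symm⟩
  exact ⟨⟨fun ⟨y, _, z, hz, hyz⟩ => a_to_b y z hz hyz, fun hb => c_to_a (b_to_c hb)⟩,
    ⟨b_to_c, fun hc => c_to_a hc |>.elim fun y ⟨_, z, hz, hyz⟩ => a_to_b y z hz hyz⟩⟩
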